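/- arXiv:2402.10919 — 3 statements merged into one kernel-verified Lean document; each statement's English description precedes it below -/
import Mathlib

section
/- In the Artin group A[B_{n+1}] with ρ = r_1 ⋯ r_{n+1} and r_0 := ρ r_n ρ^{-1}, one has ρ^2 r_n ρ^{-2} = r_1; consequently conjugation by ρ permutes the elements r_0, r_1, ..., r_n cyclically: ρ r_i ρ^{-1} = r_{i+1 mod n+1} for all 0 ≤ i ≤ n. -/
/-! Conjugation by `ρ = r_1 ⋯ r_{n+1}` moves `r_k` to `r_{k+1}` for `k < n`: writing
`ρ = A (r_k r_{k+1}) B` with `A` commuting with `r_{k+1}` and `B` with `r_k`, this is the braid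
relation `r_k r_{k+1} r_k = r_{k+1} r_k r_{k+1}`. For `r_n` one proves `P_j² r_n = r_j P_j²` for the
suffix products `P_j = r_j ⋯ r_{n+1}` by descending induction on `j`: the case `j = n` is the
relation `(r_n r_{n+1})² = (r_{n+1} r_n)²`, and each step uses one braid relation and one
commutation. At `j = 1` this is `ρ² r_n ρ⁻² = r_1`, i.e. `ρ r_0 ρ⁻¹ = r_1`, while `ρ r_n ρ⁻¹ = r_0`
holds by definition. -/

/-- Defining relations of the Artin group of type `B_{n+1}` on generators indexed by
`Fin (n+1)`; index `i` represents the paper's generator `r_{i+1}`. -/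
def BRels (n : ℕ) : Set (FreeGroup (Fin (n + 1))) :=
  { x | ∃ i j : Fin (n + 1), (i : ℕ) + 1 = j ∧ (j : ℕ) < n ∧
      x = .of i * .of j * .of i * (.of j * .of i * .of j)⁻¹ } ∪
  { x | n ≥ 1 ∧ x = .of (⟨n - 1, by omega⟩ : Fin (n + 1)) * .of ⟨n, by omega⟩ *
      .of ⟨n - 1, by omega⟩ * .of ⟨n, by omega⟩ *
      (.of (⟨n, by omega⟩ : Fin (n + 1)) * .of ⟨n - 1, by omega⟩ *
        .of ⟨n, by omega⟩ * .of ⟨n - 1, by omega⟩)⁻¹ } ∪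
  { x | ∃ i j : Fin (n + 1), (i : ℕ) + 2 ≤ j ∧ x = .of i * .of j * (.of j * .of i)⁻¹ }

/-- The Artin group of type `B_{n+1}`. -/
abbrev ArtinB (n : ℕ) := PresentedGroup (BRels n)

/-- The standard generator `r_{i+1}` of `A[B_{n+1}]`. -/
def rB (n : ℕ) (i : Fin (n + 1)) : ArtinB n := PresentedGroup.of i

/-- `ρ = r_1 r_2 ⋯ r_{n+1}`. -/
def ρB (n : ℕ) : ArtinB n := (List.ofFn fun i => rB n i).prod

/-- Defining relations of the Euclidean braid group `A[Ã_n]` on generators `t_0, …, t_n`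
indexed cyclically by `Fin (n+1)`. -/
def ARels (n : ℕ) : Set (FreeGroup (Fin (n + 1))) :=
  { x | ∃ i : Fin (n + 1), x = .of i * .of (i + 1) * .of i *
      (.of (i + 1) * .of i * .of (i + 1))⁻¹ } ∪
  { x | ∃ i j : Fin (n + 1), j ≠ i + 1 ∧ i ≠ j + 1 ∧ i ≠ j ∧
      x = .of i * .of j * (.of j * .of i)⁻¹ }

/-- The Euclidean braid group `A[Ã_n]`. -/
abbrev ArtinA (n : ℕ) := PresentedGroup (ARels n)

/-- The standard generator `t_i` of `A[Ã_n]`. -/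
def tA (n : ℕ) (i : Fin (n + 1)) : ArtinA n := PresentedGroup.of i

/-- `r_0, r_1, …, r_n` in `A[B_{n+1}]`: for `i ≥ 1` this is the standard generator `r_i`,
and `r_0 = ρ r_n ρ⁻¹`. -/
def rcyc (n : ℕ) (i : Fin (n + 1)) : ArtinB n :=
  if h : (i : ℕ) = 0 then ρB n * rB n ⟨n - 1, by omega⟩ * (ρB n)⁻¹
  else rB n ⟨(i : ℕ) - 1, by omega⟩

section Monoid

variable {M : Type*} [Monoid M]

theorem semiconjBy_of_braid {A a b B : M} (hAb : Commute A b) (haB : Commute a B)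
    (hab : a * b * a = b * a * b) : SemiconjBy (A * (a * b) * B) a b := by
  calc A * (a * b) * B * a = A * (a * b * a) * B := by simp only [mul_assoc, ← haB.eq]
    _ = A * (b * a * b) * B := by rw [hab]
    _ = b * (A * (a * b) * B) := by simp only [← mul_assoc, hAb.eq]

theorem semiconjBy_sq_of_braid_four {x y : M} (h : x * y * x * y = y * x * y * x) :
    SemiconjBy ((x * y) ^ 2) x x := by
  calc (x * y) ^ 2 * x = x * (y * x * y * x) := by simp only [sq, mul_assoc]
    _ = x * (x * y) ^ 2 := by rw [← h]; simp only [sq, mul_assoc]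

theorem semiconjBy_sq_mul_of_braid {G : Type*} [Group G] {a b q c : G}
    (hab : a * b * a = b * a * b) (haq : Commute a q) (h : SemiconjBy ((b * q) ^ 2) c b) :
    SemiconjBy ((a * (b * q)) ^ 2) c a := by
  have hq : q * (b * (q * c)) = b * (q * (b * q)) := by
    simpa only [SemiconjBy, sq, mul_assoc, mul_right_inj] using h
  calc (a * (b * q)) ^ 2 * c = a * (b * (a * (q * (b * (q * c))))) := by
        simp only [sq, mul_assoc, haq.symm.left_comm]
    _ = a * (b * a * b) * (q * (b * q)) := by rw [hq]; simp only [mul_assoc]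
    _ = a * (a * b * a) * (q * (b * q)) := by rw [hab]
    _ = a * (a * (b * q)) ^ 2 := by simp only [sq, mul_assoc, haq.left_comm]

def prodRange (g : ℕ → M) (j k : ℕ) : M := ((List.range' j k).map g).prod

variable (g : ℕ → M)

theorem prodRange_zero (j : ℕ) : prodRange g j 0 = 1 := rfl

theorem prodRange_succ (j k : ℕ) : prodRange g j (k + 1) = g j * prodRange g (j + 1) k := by
  simp [prodRange, List.range'_succ]

theorem prodRange_add (j k l : ℕ) :
    prodRange g j (k + l) = prodRange g j k * prodRange g (j + k) l := by
  rw [prodRange, prodRange, prodRange, ← List.range'_append, List.map_append, List.prod_append,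
    one_mul]

theorem prodRange_two (j : ℕ) : prodRange g j 2 = g j * g (j + 1) := by
  rw [prodRange_succ, prodRange_succ, prodRange_zero, mul_one]

variable {g}

theorem commute_prodRange {x : M} {j k : ℕ} (h : ∀ i, j ≤ i → i < j + k → Commute x (g i)) :
    Commute x (prodRange g j k) :=
  Commute.list_prod_right _ _ fun _ hy => by
    obtain ⟨i, hi, rfl⟩ := List.mem_map.1 hy
    exact h i (List.mem_range'_1.1 hi).1 (List.mem_range'_1.1 hi).2

end Monoid

structure SatisfiesBRels {G : Type*} [Group G] (n : ℕ) (g : ℕ → G) : Prop where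
  braid : ∀ k, k + 2 ≤ n → g k * g (k + 1) * g k = g (k + 1) * g k * g (k + 1)
  braid_last : g (n - 1) * g n * g (n - 1) * g n = g n * g (n - 1) * g n * g (n - 1)
  commute : ∀ i j, i + 2 ≤ j → j ≤ n → Commute (g i) (g j)

namespace SatisfiesBRels

variable {G : Type*} [Group G] {n : ℕ} {g : ℕ → G}

theorem semiconjBy_prodRange (hg : SatisfiesBRels n g) {k : ℕ} (hk : k + 2 ≤ n) :
    SemiconjBy (prodRange g 0 (n + 1)) (g k) (g (k + 1)) := by
  rw [show n + 1 = k + 2 + (n - 1 - k) by omega, prodRange_add, prodRange_add, prodRange_two,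
    zero_add]
  refine semiconjBy_of_braid ?_ ?_ (hg.braid k hk)
  · exact (commute_prodRange fun i _ hi => (hg.commute i (k + 1) (by omega) (by omega)).symm).symm
  · exact commute_prodRange fun i hi _ => hg.commute k i (by omega) (by omega)

theorem semiconjBy_sq_prodRange_suffix (hg : SatisfiesBRels n g) (hn : 1 ≤ n) {j : ℕ}
    (hj : j ≤ n - 1) : SemiconjBy (prodRange g j (n + 1 - j) ^ 2) (g (n - 1)) (g j) := by
  induction hj using Nat.decreasingInduction with
  | self =>
    rw [show n + 1 - (n - 1) = 2 by omega, prodRange_two, Nat.sub_add_cancel hn]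
    exact semiconjBy_sq_of_braid_four hg.braid_last
  | of_succ k hk ih =>
    rw [show n + 1 - (k + 1) = n + 1 - (k + 2) + 1 by omega, prodRange_succ] at ih
    rw [show n + 1 - k = n + 1 - (k + 2) + 1 + 1 by omega, prodRange_succ, prodRange_succ]
    exact semiconjBy_sq_mul_of_braid (hg.braid k (by omega))
      (commute_prodRange fun i hi _ => hg.commute k i (by omega) (by omega)) ih

theorem semiconjBy_sq_prodRange (hg : SatisfiesBRels n g) (hn : 1 ≤ n) :
    SemiconjBy (prodRange g 0 (n + 1) ^ 2) (g (n - 1)) (g 0) := by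
  simpa using hg.semiconjBy_sq_prodRange_suffix hn (Nat.zero_le _)

end SatisfiesBRels

section ArtinB

open Fin.NatCast

variable {n : ℕ}

theorem rB_natCast (k : ℕ) (hk : k ≤ n) : rB n (k : Fin (n + 1)) = rB n ⟨k, by omega⟩ :=
  congrArg (rB n) (Fin.ext (Fin.val_cast_of_lt (by omega)))

theorem satisfiesBRels_rB (hn : 1 ≤ n) :
    SatisfiesBRels n (fun k : ℕ => rB n (k : Fin (n + 1))) where
  braid k hk := by
    rw [rB_natCast k (by omega), rB_natCast (k + 1) (by omega)]
    exact PresentedGroup.mk_eq_mk_of_mul_inv_mem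
      (Or.inl (Or.inl ⟨⟨k, by omega⟩, ⟨k + 1, by omega⟩, rfl, hk, rfl⟩))
  braid_last := by
    rw [rB_natCast (n - 1) (by omega), rB_natCast n le_rfl]
    exact PresentedGroup.mk_eq_mk_of_mul_inv_mem (Or.inl (Or.inr ⟨hn, rfl⟩))
  commute i j hij hj := by
    rw [rB_natCast i (by omega), rB_natCast j hj]
    exact PresentedGroup.mk_eq_mk_of_mul_inv_mem (Or.inr ⟨_, _, hij, rfl⟩)

theorem ρB_eq_prodRange : ρB n = prodRange (fun k : ℕ => rB n (k : Fin (n + 1))) 0 (n + 1) := by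
  rw [ρB, prodRange]
  congr 1
  refine List.ext_getElem (by simp) fun i _ hi => ?_
  rw [List.getElem_ofFn, List.getElem_map, List.getElem_range', zero_add, one_mul,
    rB_natCast i (by simpa using hi)]

theorem semiconjBy_sq_ρB (hn : 1 ≤ n) :
    SemiconjBy (ρB n ^ 2) (rB n ⟨n - 1, Nat.sub_lt_succ n 1⟩) (rB n ⟨0, n.succ_pos⟩) := by
  have h := (satisfiesBRels_rB hn).semiconjBy_sq_prodRange hn
  rwa [rB_natCast (n - 1) (by omega), rB_natCast 0 (by omega), ← ρB_eq_prodRange] at h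

theorem rcyc_of_val_eq_zero {i : Fin (n + 1)} (hi : (i : ℕ) = 0) :
    rcyc n i = ρB n * rB n ⟨n - 1, Nat.sub_lt_succ n 1⟩ * (ρB n)⁻¹ :=
  dif_pos hi

theorem rcyc_of_ne_zero {i : Fin (n + 1)} (hi : (i : ℕ) ≠ 0) :
    rcyc n i = rB n ⟨i - 1, by omega⟩ :=
  dif_neg hi

theorem semiconjBy_ρB_rcyc (hn : 1 ≤ n) (i : Fin (n + 1)) :
    SemiconjBy (ρB n) (rcyc n i) (rcyc n (i + 1)) := by
  induction i using Fin.lastCases with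
  | last =>
    rw [Fin.last_add_one, rcyc_of_ne_zero (by simp; omega), rcyc_of_val_eq_zero (by simp)]
    exact (inv_mul_cancel_right _ _).symm
  | cast j =>
    rw [Fin.coeSucc_eq_succ]
    rcases j with ⟨_ | k, hk⟩
    · rw [rcyc_of_val_eq_zero (by simp), rcyc_of_ne_zero (by simp)]
      have h := (semiconjBy_sq_ρB hn).eq
      show ρB n * (ρB n * _ * (ρB n)⁻¹) = _ * ρB n
      rw [← mul_assoc, ← mul_assoc, ← sq, h, sq, ← mul_assoc, mul_inv_cancel_right]
      rfl
    · rw [rcyc_of_ne_zero (by simp), rcyc_of_ne_zero (by simp)]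
      have h := (satisfiesBRels_rB hn).semiconjBy_prodRange (k := k) (by omega)
      rw [rB_natCast k (by omega), rB_natCast (k + 1) (by omega), ← ρB_eq_prodRange] at h
      exact h

end ArtinB

/-- `ρ² r_n ρ⁻² = r_1`, and conjugation by `ρ` permutes `r_0, r_1, …, r_n` cyclically. -/
theorem stmt1 (n : ℕ) (hn : 1 ≤ n) :
    (ρB n) ^ 2 * rB n ⟨n - 1, by omega⟩ * (ρB n) ^ (-2 : ℤ) = rB n ⟨0, by omega⟩ ∧
    ∀ i : Fin (n + 1), ρB n * rcyc n i * (ρB n)⁻¹ = rcyc n (i + 1) := by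
  rw [zpow_neg, zpow_ofNat]
  exact ⟨mul_inv_eq_of_eq_mul (semiconjBy_sq_ρB hn).eq,
    fun i => mul_inv_eq_of_eq_mul (semiconjBy_ρB_rcyc hn i).eq⟩
end

section
/- There is a well-defined group homomorphism φ₀ : A[Ã_n] → A[B_{n+1}] sending t_i ↦ r_i for 1 ≤ i ≤ n and t_0 ↦ ρ r_n ρ^{-1}, where ρ = r_1⋯r_{n+1}. -/
/-! Conjugation by `ρ` permutes `r_0, r_1, …, r_n` cyclically. For `1 ≤ i < n`,
`ρ r_i ρ⁻¹ = r_{i+1}` follows from the braid relations alone, and `ρ r_n ρ⁻¹ = r_0` by definition;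
the remaining identity `ρ² r_n ρ⁻² = r_1` comes from writing `ρ = δ r_{n+1}` with `δ = r_1 ⋯ r_n`,
using the classical type-`A` identity `δ² r_n δ⁻² = r_1` together with the relation
`r_n r_{n+1} r_n r_{n+1} = r_{n+1} r_n r_{n+1} r_n`. Hence every defining relation of `A[Ã_n]`,
evaluated at the `r_i`, is a conjugate by a power of `ρ` of one involving `r_1` and some `r_j`
with `j ≥ 1`, and those are relations of `A[B_{n+1}]`. -/

section BraidSequence

variable {G : Type*} [Group G]

def rangeProd (s : ℕ → G) (a m : ℕ) : G := ((List.range' a m).map s).prod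

variable (s : ℕ → G)

theorem rangeProd_add (a m k : ℕ) :
    rangeProd s a (m + k) = rangeProd s a m * rangeProd s (a + m) k := by
  rw [rangeProd, rangeProd, rangeProd, ← List.prod_append, ← List.map_append, ← List.range'_append,
    Nat.one_mul]

@[simp]
theorem rangeProd_one (a : ℕ) : rangeProd s a 1 = s a := by
  simp [rangeProd]

theorem rangeProd_succ (a m : ℕ) : rangeProd s a (m + 1) = rangeProd s a m * s (a + m) := by
  rw [rangeProd_add, rangeProd_one]

theorem rangeProd_succ' (a m : ℕ) : rangeProd s a (m + 1) = s a * rangeProd s (a + 1) m := by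
  rw [add_comm m, rangeProd_add, rangeProd_one]

variable {s}

theorem Commute.rangeProd_right {x : G} {a m : ℕ} (h : ∀ k, a ≤ k → k < a + m → Commute x (s k)) :
    Commute x (rangeProd s a m) :=
  Commute.list_prod_right _ _ fun y hy => by
    obtain ⟨k, hk, rfl⟩ := List.mem_map.mp hy
    rw [List.mem_range'_1] at hk
    exact h k hk.1 hk.2

variable (hcomm : ∀ a b, a + 2 ≤ b → Commute (s a) (s b))
include hcomm

theorem rangeProd_mul_of_braid {a k l : ℕ} (hak : a ≤ k) (hkl : k + 2 ≤ a + l)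
    (hbraid : s k * s (k + 1) * s k = s (k + 1) * s k * s (k + 1)) :
    rangeProd s a l * s k = s (k + 1) * rangeProd s a l := by
  obtain ⟨p, rfl⟩ := Nat.exists_eq_add_of_le hak
  obtain ⟨q, rfl⟩ : ∃ q, l = p + 1 + 1 + q := ⟨l - (p + 2), by omega⟩
  set L := rangeProd s a p
  set R := rangeProd s (a + p + 1 + 1) q
  have hR : Commute (s (a + p)) R := Commute.rangeProd_right fun k hk _ => hcomm _ _ hk
  have hL : Commute (s (a + p + 1)) L :=
    Commute.rangeProd_right fun k _ hk => (hcomm _ _ (by omega)).symm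
  have hsplit : rangeProd s a (p + 1 + 1 + q) = L * s (a + p) * s (a + p + 1) * R := by
    rw [rangeProd_add, rangeProd_succ, rangeProd_succ]; rfl
  rw [hsplit]
  calc L * s (a + p) * s (a + p + 1) * R * s (a + p)
      = L * (s (a + p) * s (a + p + 1) * s (a + p)) * R := by simp only [mul_assoc, hR.eq]
    _ = (L * s (a + p + 1)) * s (a + p) * s (a + p + 1) * R := by rw [hbraid]; group
    _ = s (a + p + 1) * (L * s (a + p) * s (a + p + 1) * R) := by rw [← hL.eq]; group

theorem rangeProd_mul_self_mul_last {a d : ℕ}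
    (hbraid : ∀ k, a ≤ k → k < a + d → s k * s (k + 1) * s k = s (k + 1) * s k * s (k + 1)) :
    rangeProd s a (d + 1) * rangeProd s a (d + 1) * s (a + d)
      = s a * (rangeProd s a (d + 1) * rangeProd s a (d + 1)) := by
  induction d generalizing a with
  | zero => simp [mul_assoc]
  | succ d ih =>
    set x := s a
    set y := s (a + 1)
    set D := rangeProd s (a + 1) (d + 1)
    have hD : D * D * s (a + (d + 1)) = y * (D * D) := by
      rw [show a + (d + 1) = a + 1 + d by omega]
      exact ih fun k hk hk' => hbraid k (by omega) (by omega)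
    -- conjugating `x` by `D = y * R` only sees `y`, since `R` commutes with `x`
    have hDx : D * x = y * x * y⁻¹ * D := by
      have hR : Commute x (rangeProd s (a + 1 + 1) d) :=
        Commute.rangeProd_right fun k hk _ => hcomm _ _ hk
      rw [show D = y * _ from rangeProd_succ' s (a + 1) d, mul_assoc, ← hR.eq]; group
    have hxyx : x * y * x = y * x * y := hbraid a le_rfl (by omega)
    rw [rangeProd_succ' s a (d + 1)]
    calc x * D * (x * D) * s (a + (d + 1)) = x * (D * x) * D * s (a + (d + 1)) := by group
      _ = x * y * x * y⁻¹ * (D * D * s (a + (d + 1))) := by rw [hDx]; group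
      _ = x * (y * x * y) * y⁻¹ * (D * D) := by rw [hD]; group
      _ = x * (x * (y * x * y⁻¹ * D) * D) := by rw [← hxyx]; group
      _ = x * (x * D * (x * D)) := by rw [← hDx]; group

end BraidSequence

namespace ArtinB

variable {n : ℕ}

-- `rB` extended by `1` past the last index, so that `gen n a` and `gen n b` commute whenever
-- `a + 2 ≤ b`, with no upper bound on `b`
def gen (n k : ℕ) : ArtinB n := if h : k < n + 1 then rB n ⟨k, h⟩ else 1

theorem gen_of_lt {k : ℕ} (h : k < n + 1) : gen n k = rB n ⟨k, h⟩ := dif_pos h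

theorem gen_braid {a : ℕ} (h : a + 1 < n) :
    gen n a * gen n (a + 1) * gen n a = gen n (a + 1) * gen n a * gen n (a + 1) := by
  rw [gen_of_lt (by omega), gen_of_lt (by omega)]
  exact PresentedGroup.mk_eq_mk_of_mul_inv_mem (Or.inl (Or.inl ⟨_, _, rfl, h, rfl⟩))

theorem gen_braid_four (hn : 1 ≤ n) :
    gen n (n - 1) * gen n n * gen n (n - 1) * gen n n
      = gen n n * gen n (n - 1) * gen n n * gen n (n - 1) := by
  rw [gen_of_lt (by omega), gen_of_lt (by omega)]
  exact PresentedGroup.mk_eq_mk_of_mul_inv_mem (Or.inl (Or.inr ⟨hn, rfl⟩))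

theorem gen_commute {a b : ℕ} (h : a + 2 ≤ b) : Commute (gen n a) (gen n b) := by
  by_cases hb : b < n + 1
  · rw [gen_of_lt (by omega), gen_of_lt hb]
    exact PresentedGroup.mk_eq_mk_of_mul_inv_mem (Or.inr ⟨⟨a, by omega⟩, ⟨b, hb⟩, h, rfl⟩)
  · rw [show gen n b = 1 from dif_neg hb]
    exact Commute.one_right _

theorem ρB_eq_rangeProd : ρB n = rangeProd (gen n) 0 (n + 1) := by
  rw [ρB, rangeProd, ← List.range_eq_range', ← List.map_coe_finRange_eq_range, List.map_map,
    List.ofFn_eq_map]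
  exact congrArg List.prod (List.map_congr_left fun i _ => (gen_of_lt i.isLt).symm)

theorem ρB_mul_gen {k : ℕ} (hk : k + 2 ≤ n) : ρB n * gen n k = gen n (k + 1) * ρB n := by
  rw [ρB_eq_rangeProd]
  exact rangeProd_mul_of_braid (fun _ _ => gen_commute) k.zero_le (by omega) (gen_braid (by omega))

theorem ρB_mul_self_mul_gen (hn : 1 ≤ n) :
    ρB n * ρB n * gen n (n - 1) = gen n 0 * (ρB n * ρB n) := by
  obtain ⟨m, rfl⟩ : ∃ m, n = m + 1 := ⟨n - 1, by omega⟩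
  rw [Nat.add_sub_cancel]
  have hρ : ρB (m + 1) = rangeProd (gen (m + 1)) 0 (m + 1) * gen (m + 1) (m + 1) := by
    rw [ρB_eq_rangeProd, rangeProd_succ, zero_add]
  have hδ : rangeProd (gen (m + 1)) 0 (m + 1) = rangeProd (gen (m + 1)) 0 m * gen (m + 1) m := by
    rw [rangeProd_succ, zero_add]
  have hδsq := rangeProd_mul_self_mul_last (fun _ _ => gen_commute) (a := 0) (d := m)
    fun k _ hk => gen_braid (n := m + 1) (by omega)
  have hL : Commute (gen (m + 1) (m + 1)) (rangeProd (gen (m + 1)) 0 m) :=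
    Commute.rangeProd_right fun k _ hk => (gen_commute (by omega)).symm
  have hcb := gen_braid_four hn
  rw [zero_add] at hδsq
  rw [Nat.add_sub_cancel] at hcb
  set δ := rangeProd (gen (m + 1)) 0 (m + 1)
  set b := gen (m + 1) (m + 1)
  set c := gen (m + 1) m
  have hbδ : b * δ = δ * c⁻¹ * b * c := by rw [hδ, ← mul_assoc, hL.eq]; group
  calc ρB (m + 1) * ρB (m + 1) * c = δ * (b * δ) * b * c := by rw [hρ]; group
    _ = δ * δ * c⁻¹ * (c * b * c * b) := by rw [hbδ, hcb]; group
    _ = δ * δ * c * (c⁻¹ * b * c * b) := by group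
    _ = gen (m + 1) 0 * (δ * (b * δ) * b) := by rw [hδsq, hbδ]; group
    _ = gen (m + 1) 0 * (ρB (m + 1) * ρB (m + 1)) := by rw [hρ]; group

end ArtinB

open ArtinB

theorem Fin.val_one_eq_one {n : ℕ} (hn : 1 ≤ n) : ((1 : Fin (n + 1)) : ℕ) = 1 := by
  rw [Fin.val_one']; exact Nat.mod_eq_of_lt (by omega)

theorem Fin.val_two_eq_two {n : ℕ} (hn : 2 ≤ n) : ((2 : Fin (n + 1)) : ℕ) = 2 := by
  rw [Fin.coe_ofNat_eq_mod]; exact Nat.mod_eq_of_lt (by omega)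

section rcyc

variable {n : ℕ}

theorem rcyc_zero : rcyc n 0 = ρB n * gen n (n - 1) * (ρB n)⁻¹ := by
  rw [rcyc, dif_pos (show ((0 : Fin (n + 1)) : ℕ) = 0 from rfl), gen_of_lt (by omega)]

theorem rcyc_of_val_ne_zero {i : Fin (n + 1)} (h : (i : ℕ) ≠ 0) : rcyc n i = gen n (i - 1) := by
  rw [rcyc, dif_neg h, gen_of_lt (by omega)]

theorem conj_ρB_rcyc (hn : 1 ≤ n) (i : Fin (n + 1)) :
    MulAut.conj (ρB n) (rcyc n i) = rcyc n (i + 1) := by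
  rw [MulAut.conj_apply]
  by_cases hlast : i = Fin.last n
  · rw [hlast, Fin.last_add_one, rcyc_zero, rcyc_of_val_ne_zero (by rw [Fin.val_last]; omega),
      Fin.val_last]
  have hsucc : ((i + 1 : Fin (n + 1)) : ℕ) = i + 1 := by rw [Fin.val_add_one, if_neg hlast]
  rw [rcyc_of_val_ne_zero (i := i + 1) (by omega), hsucc, Nat.add_sub_cancel]
  by_cases hi : (i : ℕ) = 0
  · rw [hi, show i = 0 from Fin.ext hi, rcyc_zero]
    calc ρB n * (ρB n * gen n (n - 1) * (ρB n)⁻¹) * (ρB n)⁻¹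
        = ρB n * ρB n * gen n (n - 1) * (ρB n * ρB n)⁻¹ := by group
      _ = gen n 0 := by rw [ρB_mul_self_mul_gen hn]; group
  · have hlt := Fin.val_lt_last hlast
    rw [rcyc_of_val_ne_zero hi, ρB_mul_gen (by omega), Nat.sub_add_cancel (by omega)]
    group

theorem rcyc_add (hn : 1 ≤ n) (i d : Fin (n + 1)) :
    rcyc n (i + d) = MulAut.conj (ρB n ^ (d : ℕ)) (rcyc n i) := by
  induction d using Fin.induction with
  | zero => simp
  | succ j ih =>
    rw [Fin.val_succ, ← Fin.coeSucc_eq_succ, ← add_assoc, ← conj_ρB_rcyc hn, ih,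
      Fin.val_castSucc, pow_succ', map_mul, MulAut.mul_apply]

theorem rcyc_one (hn : 1 ≤ n) : rcyc n 1 = gen n 0 := by
  rw [rcyc_of_val_ne_zero (by rw [Fin.val_one_eq_one hn]; omega), Fin.val_one_eq_one hn]

theorem rcyc_two (hn : 2 ≤ n) : rcyc n 2 = gen n 1 := by
  rw [rcyc_of_val_ne_zero (by rw [Fin.val_two_eq_two hn]; omega), Fin.val_two_eq_two hn]

theorem rcyc_braid (hn : 2 ≤ n) (i : Fin (n + 1)) :
    rcyc n i * rcyc n (i + 1) * rcyc n i = rcyc n (i + 1) * rcyc n i * rcyc n (i + 1) := by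
  have hbraid : rcyc n 1 * rcyc n 2 * rcyc n 1 = rcyc n 2 * rcyc n 1 * rcyc n 2 := by
    rw [rcyc_one (by omega), rcyc_two hn]; exact gen_braid (by omega)
  rw [show i = 1 + (i - 1) by grind, show 1 + (i - 1) + 1 = 2 + (i - 1) by grind,
    rcyc_add (by omega), rcyc_add (by omega)]
  simp only [← map_mul, hbraid]

theorem rcyc_commute (hn : 2 ≤ n) {i j : Fin (n + 1)} (h1 : j ≠ i + 1) (h2 : i ≠ j + 1)
    (h3 : i ≠ j) : Commute (rcyc n i) (rcyc n j) := by
  set e := j - (i - 1)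
  have he : 3 ≤ (e : ℕ) := by
    have he0 : e ≠ 0 := by grind
    have he1 : e ≠ 1 := by grind
    have he2 : e ≠ 2 := by grind
    rw [Ne, Fin.ext_iff] at he0 he1 he2
    rw [Fin.val_zero] at he0
    rw [Fin.val_one_eq_one (by omega)] at he1
    rw [Fin.val_two_eq_two hn] at he2
    omega
  rw [show i = 1 + (i - 1) by grind, show j = e + (i - 1) by grind, rcyc_add (by omega),
    rcyc_add (by omega), rcyc_one (by omega), rcyc_of_val_ne_zero (by omega)]
  exact (gen_commute (by omega)).map _

theorem lift_rcyc_eq_one_of_mem_ARels (hn : 2 ≤ n) :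
    ∀ r ∈ ARels n, FreeGroup.lift (rcyc n) r = 1 := by
  rintro r (⟨i, rfl⟩ | ⟨i, j, h1, h2, h3, rfl⟩) <;>
    simp only [map_mul, map_inv, FreeGroup.lift_apply_of, mul_inv_eq_one]
  · exact rcyc_braid hn i
  · exact (rcyc_commute hn h1 h2 h3).eq

end rcyc

/-- There is a well-defined homomorphism `φ₀ : A[Ã_n] → A[B_{n+1}]` sending `t_i ↦ r_i`
for `1 ≤ i ≤ n` and `t_0 ↦ ρ r_n ρ⁻¹` (these images are exactly `rcyc`). -/
theorem stmt6 (n : ℕ) (hn : 2 ≤ n) :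
    ∃ φ₀ : ArtinA n →* ArtinB n, ∀ i : Fin (n + 1), φ₀ (tA n i) = rcyc n i :=
  ⟨PresentedGroup.toGroup (lift_rcyc_eq_one_of_mem_ARels hn),
    fun _ => PresentedGroup.toGroup.of _⟩
end

section
/- Let P be a proper parabolic subgroup of A[Ã_n], i.e., P = g ⟨X⟩ g^{-1} for some g ∈ A[Ã_n] and proper subset X ⊊ {t_0,...,t_n}. Then φ₀(P) is a parabolic subgroup of A[B_{n+1}], where φ₀ is the standard embedding of A[Ã_n] as ker ξ in A[B_{n+1}]. -/
/-- A parabolic subgroup of `A[Ã_n]`: a conjugate of a subgroup generated by a subset of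
the standard generators `t_0, …, t_n`. -/
def IsParabolicA (n : ℕ) (P : Subgroup (ArtinA n)) : Prop :=
  ∃ (g : ArtinA n) (X : Set (Fin (n + 1))),
    P = Subgroup.map (MulAut.conj g).toMonoidHom (Subgroup.closure (tA n '' X))

/-- A parabolic subgroup of `A[B_{n+1}]`: a conjugate of a subgroup generated by a subset
of the standard generators `r_1, …, r_{n+1}`. -/
def IsParabolicB (n : ℕ) (P : Subgroup (ArtinB n)) : Prop :=
  ∃ (h : ArtinB n) (Y : Set (Fin (n + 1))),
    P = Subgroup.map (MulAut.conj h).toMonoidHom (Subgroup.closure (rB n '' Y))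

/-!
Conjugation by `ρ = r_1 ⋯ r_{n+1}` permutes `r_0, r_1, …, r_n` cyclically, `r_i ↦ r_{i+1}`
with indices mod `n + 1`. For `1 ≤ i < n` this is the braid relation
`r_i r_{i+1} r_i = r_{i+1} r_i r_{i+1}` pushed through `ρ`; `r_n ↦ r_0` is the definition of
`r_0`; and `r_0 ↦ r_1`, i.e. `ρ r_n ρ⁻¹ = ρ⁻¹ r_1 ρ`, follows from
`r_n r_{n+1} r_n r_{n+1} = r_{n+1} r_n r_{n+1} r_n`.
Hence, choosing `t_k ∉ X`, every `φ₀(t_i) = r_i` with `i ∈ X` equals `ρ^k r_{i-k} ρ^{-k}`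
with `i - k ≢ 0`, a conjugate of a standard generator, and
`φ₀(g ⟨X⟩ g⁻¹) = (φ₀(g) ρ^k) ⟨r_{i-k} : i ∈ X⟩ (φ₀(g) ρ^k)⁻¹`.
-/

theorem map_conj_closure_image_eq {G H ι κ : Type*} [Group G] [Group H] (φ : G →* H)
    (g : G) (c : H) {t : ι → G} {r : κ → H} {σ : ι → κ} {X : Set ι}
    (h : ∀ i ∈ X, φ (t i) = c * r (σ i) * c⁻¹) :
    ((Subgroup.closure (t '' X)).map (MulAut.conj g).toMonoidHom).map φ =
      (Subgroup.closure (r '' (σ '' X))).map (MulAut.conj (φ g * c)).toMonoidHom := by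
  rw [Subgroup.map_map, MonoidHom.map_closure, MonoidHom.map_closure, Set.image_image,
    Set.image_image, Set.image_image]
  congr 1
  refine Set.image_congr fun i hi => ?_
  simp only [MonoidHom.coe_comp, Function.comp_apply, MulEquiv.coe_toMonoidHom,
    MulAut.conj_apply, map_mul, map_inv, MulAut.mul_apply, h i hi]
  group

namespace ArtinB

/-- The generator `r_{i+1}` indexed by a natural number; indices above `n` are clamped to `n`. -/
def rN (n i : ℕ) : ArtinB n := rB n ⟨min i n, by omega⟩

variable {n : ℕ}

theorem rN_of_le {i : ℕ} (h : i ≤ n) : rN n i = rB n ⟨i, by omega⟩ := by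
  simp [rN, Nat.min_eq_left h]

theorem rN_braid {i : ℕ} (h : i + 1 < n) :
    rN n i * rN n (i + 1) * rN n i = rN n (i + 1) * rN n i * rN n (i + 1) := by
  rw [rN_of_le (by omega), rN_of_le (by omega)]
  exact PresentedGroup.mk_eq_mk_of_mul_inv_mem (Or.inl (Or.inl ⟨_, _, rfl, h, rfl⟩))

theorem rN_braid_four (hn : 1 ≤ n) :
    rN n (n - 1) * rN n n * rN n (n - 1) * rN n n =
      rN n n * rN n (n - 1) * rN n n * rN n (n - 1) := by
  rw [rN_of_le (by omega), rN_of_le le_rfl]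
  exact PresentedGroup.mk_eq_mk_of_mul_inv_mem (Or.inl (Or.inr ⟨hn, rfl⟩))

theorem rN_commute {i j : ℕ} (h : i + 2 ≤ j) (hj : j ≤ n) : Commute (rN n i) (rN n j) := by
  rw [rN_of_le (by omega), rN_of_le hj]
  exact PresentedGroup.mk_eq_mk_of_mul_inv_mem (Or.inr ⟨_, _, h, rfl⟩)

/-- `ascProd n a b = r_{a+1} r_{a+2} ⋯ r_{a+b}` in the paper's indexing. -/
def ascProd (n a b : ℕ) : ArtinB n := ((List.range' a b).map (rN n)).prod

theorem ascProd_zero (a : ℕ) : ascProd n a 0 = 1 := rfl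

theorem ascProd_succ (a b : ℕ) : ascProd n a (b + 1) = rN n a * ascProd n (a + 1) b := by
  simp [ascProd, List.range'_succ]

theorem ascProd_succ' (a b : ℕ) : ascProd n a (b + 1) = ascProd n a b * rN n (a + b) := by
  simp [ascProd, List.range'_1_concat]

theorem ascProd_add (a b c : ℕ) : ascProd n a (b + c) = ascProd n a b * ascProd n (a + b) c := by
  simp [ascProd, ← List.range'_append_1]

theorem commute_rN_ascProd_of_lt {j a b : ℕ} (h : j + 2 ≤ a) (hb : a + b ≤ n + 1) :
    Commute (rN n j) (ascProd n a b) :=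
  Commute.list_prod_right _ _ fun x hx => by
    obtain ⟨m, hm, rfl⟩ := List.mem_map.mp hx
    rw [List.mem_range'_1] at hm
    exact rN_commute (by omega) (by omega)

theorem commute_rN_ascProd_of_gt {j a b : ℕ} (h : a + b + 1 ≤ j) (hj : j ≤ n) :
    Commute (rN n j) (ascProd n a b) :=
  Commute.list_prod_right _ _ fun x hx => by
    obtain ⟨m, hm, rfl⟩ := List.mem_map.mp hx
    rw [List.mem_range'_1] at hm
    exact (rN_commute (by omega) hj).symm

theorem ρB_eq_ascProd : ρB n = ascProd n 0 (n + 1) := by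
  simp only [ρB, ascProd, List.ofFn_eq_map]
  congr 1
  refine List.ext_getElem (by simp) fun i h _ => ?_
  simp only [List.length_map, List.length_finRange] at h
  simp [rN_of_le (Nat.lt_succ_iff.mp h)]

theorem ρB_eq_split {j : ℕ} (hj : j ≤ n) :
    ρB n = ascProd n 0 j * (rN n j * ascProd n (j + 1) (n - j)) := by
  have h := ascProd_add (n := n) 0 j (n - j + 1)
  rw [show j + (n - j + 1) = n + 1 by omega, zero_add, ascProd_succ j] at h
  rw [ρB_eq_ascProd, h]

theorem ρB_mul_rN {j : ℕ} (h : j + 2 ≤ n) : ρB n * rN n j = rN n (j + 1) * ρB n := by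
  have hρ : ρB n = ascProd n 0 j * (rN n j * (rN n (j + 1) * ascProd n (j + 2) (n - j - 1))) := by
    have h := ρB_eq_split (n := n) (j := j) (by omega)
    rwa [show n - j = n - j - 1 + 1 by omega, ascProd_succ] at h
  have hQ := commute_rN_ascProd_of_lt (n := n) (j := j) (b := n - j - 1) le_rfl (by omega)
  have hP := commute_rN_ascProd_of_gt (n := n) (j := j + 1) (a := 0) (b := j) (by omega) (by omega)
  have hb := rN_braid (n := n) (i := j) (by omega)
  rw [hρ]
  set P := ascProd n 0 j
  set Q := ascProd n (j + 2) (n - j - 1)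
  set x := rN n j
  set y := rN n (j + 1)
  calc P * (x * (y * Q)) * x = P * (x * y) * (x * Q) := by rw [hQ.eq]; group
    _ = P * (x * y * x) * Q := by group
    _ = P * (y * x * y) * Q := by rw [hb]
    _ = y * (P * (x * (y * Q))) := by rw [← mul_assoc y P, hP.eq]; group

theorem ascProd_inv_conj_rN_zero {k : ℕ} (hk : k + 1 ≤ n) :
    (ascProd n 1 k)⁻¹ * rN n 0 * ascProd n 1 k =
      ascProd n 0 k * rN n k * (ascProd n 0 k)⁻¹ := by
  induction k with
  | zero => simp [ascProd_zero]
  | succ k ih =>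
    have hc := commute_rN_ascProd_of_gt (n := n) (j := k + 1) (a := 0) (b := k)
      (by omega) (by omega)
    have hb := rN_braid (n := n) (i := k) (by omega)
    rw [ascProd_succ' 1 k, ascProd_succ' 0 k, add_comm 1 k, zero_add]
    have ih := ih (by omega)
    set Q := ascProd n 1 k
    set P := ascProd n 0 k
    set x := rN n k
    set y := rN n (k + 1)
    calc (Q * y)⁻¹ * rN n 0 * (Q * y) = y⁻¹ * (Q⁻¹ * rN n 0 * Q) * y := by group
      _ = (y⁻¹ * P) * x * (y⁻¹ * P)⁻¹ := by rw [ih]; group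
      _ = P * y⁻¹ * (x * y * x) * x⁻¹ * P⁻¹ := by rw [hc.inv_left.eq]; group
      _ = P * x * y * (P * x)⁻¹ := by rw [hb]; group

theorem conj_ρB_rN_pred (hn : 1 ≤ n) :
    ρB n * rN n (n - 1) * (ρB n)⁻¹ = (ρB n)⁻¹ * rN n 0 * ρB n := by
  have hρ : ρB n = ascProd n 0 (n - 1) * (rN n (n - 1) * rN n n) := by
    rw [ρB_eq_split (show n - 1 ≤ n by omega), show n - (n - 1) = 0 + 1 by omega, ascProd_succ,
      ascProd_zero, mul_one, Nat.sub_add_cancel hn]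
  have hρ' : ρB n = rN n 0 * (ascProd n 1 (n - 1) * rN n n) := by
    have h := ρB_eq_split (n := n) (j := 0) (Nat.zero_le n)
    have e := ascProd_succ' (n := n) 1 (n - 1)
    rw [ascProd_zero, one_mul, Nat.sub_zero, zero_add] at h
    rw [Nat.sub_add_cancel hn, add_comm 1, Nat.sub_add_cancel hn] at e
    rw [h, e]
  have hconj := ascProd_inv_conj_rN_zero (n := n) (k := n - 1) (by omega)
  have hc := commute_rN_ascProd_of_gt (n := n) (j := n) (a := 0) (b := n - 1) (by omega) le_rfl
  have hb := rN_braid_four hn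
  set P := ascProd n 0 (n - 1)
  set x := rN n (n - 1)
  set y := rN n n
  calc ρB n * x * (ρB n)⁻¹ = P * y⁻¹ * (y * x * y * x) * y⁻¹ * x⁻¹ * P⁻¹ := by
        rw [hρ]; group
    _ = (y⁻¹ * P) * x * (y⁻¹ * P)⁻¹ := by rw [← hb, hc.inv_left.eq]; group
    _ = y⁻¹ * ((ascProd n 1 (n - 1))⁻¹ * rN n 0 * ascProd n 1 (n - 1)) * y := by
        rw [hconj]; group
    _ = (ρB n)⁻¹ * rN n 0 * ρB n := by rw [hρ']; group

theorem rcyc_of_val_eq_zero {i : Fin (n + 1)} (h : (i : ℕ) = 0) :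
    rcyc n i = ρB n * rN n (n - 1) * (ρB n)⁻¹ := by
  rw [rcyc, dif_pos h, rN_of_le (by omega)]

theorem rcyc_of_val_ne_zero {i : Fin (n + 1)} (h : (i : ℕ) ≠ 0) : rcyc n i = rN n (i - 1) := by
  rw [rcyc, dif_neg h, rN_of_le (by omega)]

theorem conj_ρB_rcyc (hn : 1 ≤ n) (i : Fin (n + 1)) :
    ρB n * rcyc n i * (ρB n)⁻¹ = rcyc n (i + 1) := by
  rcases Fin.eq_castSucc_or_eq_last i with ⟨j, rfl⟩ | rfl
  · rw [Fin.coeSucc_eq_succ, rcyc_of_val_ne_zero (i := j.succ) (by simp), Fin.val_succ,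
      Nat.add_sub_cancel]
    rcases Nat.eq_zero_or_pos j with hj | hj
    · rw [rcyc_of_val_eq_zero hj, conj_ρB_rN_pred hn, hj]
      group
    · rw [rcyc_of_val_ne_zero (by simp; omega), mul_inv_eq_iff_eq_mul, Fin.val_castSucc,
        ρB_mul_rN (by omega), Nat.sub_add_cancel hj]
  · rw [Fin.last_add_one, rcyc_of_val_eq_zero (i := 0) rfl, rcyc_of_val_ne_zero (by simp; omega)]
    rfl

open Fin.NatCast in
theorem conj_ρB_pow_rcyc (hn : 1 ≤ n) (m : ℕ) (i : Fin (n + 1)) :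
    ρB n ^ m * rcyc n i * (ρB n ^ m)⁻¹ = rcyc n (i + m) := by
  induction m with
  | zero => simp
  | succ m ih =>
    calc ρB n ^ (m + 1) * rcyc n i * (ρB n ^ (m + 1))⁻¹
        = ρB n * (ρB n ^ m * rcyc n i * (ρB n ^ m)⁻¹) * (ρB n)⁻¹ := by
          rw [pow_succ']; group
      _ = rcyc n (i + (m + 1 : ℕ)) := by rw [ih, conj_ρB_rcyc hn, Nat.cast_succ, add_assoc]

theorem rcyc_eq_conj_rB (hn : 1 ≤ n) {i k : Fin (n + 1)} (h : i ≠ k) :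
    rcyc n i = ρB n ^ (k : ℕ) * rB n ⟨((i - k : Fin (n + 1)) : ℕ) - 1, by omega⟩ *
      (ρB n ^ (k : ℕ))⁻¹ := by
  have h0 : ((i - k : Fin (n + 1)) : ℕ) ≠ 0 := fun h0 => h (sub_eq_zero.mp (Fin.ext h0))
  calc rcyc n i = ρB n ^ (k : ℕ) * rcyc n (i - k) * (ρB n ^ (k : ℕ))⁻¹ := by
        rw [conj_ρB_pow_rcyc hn, Fin.cast_val_eq_self, sub_add_cancel]
    _ = _ := by rw [rcyc, dif_neg h0]

end ArtinB

/-- If `P = g ⟨X⟩ g⁻¹` is a proper parabolic subgroup of `A[Ã_n]`, then `φ₀(P)` is a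
parabolic subgroup of `A[B_{n+1}]`. -/
theorem stmt11 (n : ℕ) (hn : 2 ≤ n)
    (φ₀ : ArtinA n →* ArtinB n) (hφ : ∀ i : Fin (n + 1), φ₀ (tA n i) = rcyc n i)
    (g : ArtinA n) (X : Set (Fin (n + 1))) (hX : X ≠ Set.univ) :
    IsParabolicB n (Subgroup.map φ₀
      (Subgroup.map (MulAut.conj g).toMonoidHom (Subgroup.closure (tA n '' X)))) := by
  obtain ⟨k, hk⟩ := (Set.ne_univ_iff_exists_notMem X).mp hX
  refine ⟨φ₀ g * ρB n ^ (k : ℕ),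
    (fun i => ⟨((i - k : Fin (n + 1)) : ℕ) - 1, by omega⟩) '' X,
    map_conj_closure_image_eq φ₀ g _ fun i hi => ?_⟩
  rw [hφ]
  exact ArtinB.rcyc_eq_conj_rB (by omega) fun hik => hk (hik ▸ hi)
end
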